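/- Let T ∈ GL(2,ℝ) have two real negative eigenvalues, and let a be an eigenvector of T with 0 < ‖a‖ < 1/‖T⁻¹‖ (so ‖T⁻¹a‖ < 1). Then ā = a/‖a‖ is a periodic point of order 2 for the map T̄ₐ(x) = (a+T(x))/‖a+T(x)‖ on S¹, i.e., T̄ₐ²(ā) = ā and T̄ₐ(ā) ≠ ā. -/

import Mathlib

/-!
If `T a = l • a` with `l < 0`, the whole line `ℝ a` is `T`-invariant and `T̄ₐ` acts on `±ā` through
the scalar `1 ± l / ‖a‖` in front of `a`. Since `T⁻¹ a = l⁻¹ • a`, the bound `‖a‖ < 1 / ‖T⁻¹‖` forces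
`‖a‖ < |l|`, so `1 + l / ‖a‖ < 0 < 1 - l / ‖a‖`: `T̄ₐ` sends `ā` to `-ā` and `-ā` back to `ā`.
-/

/-- The "affine" map `x ↦ (a + T(x))/‖a + T(x)‖` induced on the unit sphere. -/
noncomputable def affAct {m : ℕ} (A : Matrix (Fin m) (Fin m) ℝ)
    (a x : EuclideanSpace ℝ (Fin m)) : EuclideanSpace ℝ (Fin m) :=
  ‖a + Matrix.toEuclideanLin A x‖⁻¹ • (a + Matrix.toEuclideanLin A x)

section NormedSpace

variable {E : Type*} [NormedAddCommGroup E] [NormedSpace ℝ E]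

theorem inv_norm_smul_smul_of_neg {c : ℝ} (hc : c < 0) (x : E) :
    ‖c • x‖⁻¹ • c • x = -(‖x‖⁻¹ • x) := by
  rw [norm_smul, smul_smul, Real.norm_eq_abs, abs_of_neg hc, mul_inv, mul_right_comm, inv_neg,
    neg_mul, inv_mul_cancel₀ hc.ne, neg_mul, one_mul, neg_smul]

theorem inv_norm_smul_smul_of_pos {c : ℝ} (hc : 0 < c) (x : E) :
    ‖c • x‖⁻¹ • c • x = ‖x‖⁻¹ • x := by
  rw [norm_smul, smul_smul, Real.norm_eq_abs, abs_of_pos hc, mul_inv, mul_right_comm,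
    inv_mul_cancel₀ hc.ne', one_mul]

end NormedSpace

theorem ContinuousLinearMap.norm_le_opNorm_of_apply_eq_smul {𝕜 E : Type*}
    [NontriviallyNormedField 𝕜] [NormedAddCommGroup E] [NormedSpace 𝕜 E] (f : E →L[𝕜] E)
    {x : E} {μ : 𝕜} (hx : x ≠ 0) (h : f x = μ • x) : ‖μ‖ ≤ ‖f‖ := by
  have hle := f.le_opNorm x
  rw [h, norm_smul] at hle
  exact le_of_mul_le_mul_right hle (norm_pos_iff.mpr hx)

theorem Matrix.toEuclideanCLM_inv_apply_of_apply_eq_smul {𝕜 n : Type*} [RCLike 𝕜] [Fintype n]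
    [DecidableEq n] (T : GL n 𝕜) {x : EuclideanSpace 𝕜 n} {l : 𝕜} (hl : l ≠ 0)
    (h : Matrix.toEuclideanLin (T : Matrix n n 𝕜) x = l • x) :
    Matrix.toEuclideanCLM (𝕜 := 𝕜) ((T⁻¹ : GL n 𝕜) : Matrix n n 𝕜) x = l⁻¹ • x := by
  have hTx : Matrix.toEuclideanCLM (𝕜 := 𝕜) (T : Matrix n n 𝕜) x = l • x := h
  have hx := congrArg (Matrix.toEuclideanCLM (𝕜 := 𝕜) ((T⁻¹ : GL n 𝕜) : Matrix n n 𝕜)) hTx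
  rw [← mul_apply_eq_comp, ← map_mul, Units.inv_mul, map_one, one_apply_eq_self, map_smul] at hx
  exact (eq_inv_smul_iff₀ hl).mpr hx.symm

section Eigenvector

variable {m : ℕ} {A : Matrix (Fin m) (Fin m) ℝ} {a : EuclideanSpace ℝ (Fin m)} {l : ℝ}

theorem affAct_smul_of_apply_eq_smul (hA : Matrix.toEuclideanLin A a = l • a) (t : ℝ) :
    affAct A a (t • a) = ‖(1 + t * l) • a‖⁻¹ • (1 + t * l) • a := by
  rw [affAct, map_smul, hA, smul_smul, add_smul, one_smul]

theorem affAct_inv_norm_smul_of_apply_eq_smul (hA : Matrix.toEuclideanLin A a = l • a)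
    (ha : a ≠ 0) (hl : ‖a‖ < -l) : affAct A a (‖a‖⁻¹ • a) = -(‖a‖⁻¹ • a) := by
  have hcoeff : 1 + ‖a‖⁻¹ * l < 0 := by
    have hpos := norm_pos_iff.mpr ha
    rw [inv_mul_eq_div, ← lt_neg_iff_add_neg', div_lt_iff₀ hpos]
    linarith
  rw [affAct_smul_of_apply_eq_smul hA, inv_norm_smul_smul_of_neg hcoeff]

theorem affAct_neg_inv_norm_smul_of_apply_eq_smul (hA : Matrix.toEuclideanLin A a = l • a)
    (hl : l < 0) : affAct A a (-(‖a‖⁻¹ • a)) = ‖a‖⁻¹ • a := by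
  have hcoeff : 0 < 1 + -‖a‖⁻¹ * l := by
    have : 0 ≤ -‖a‖⁻¹ * l := by nlinarith [inv_nonneg.mpr (norm_nonneg a)]
    linarith
  rw [← neg_smul, affAct_smul_of_apply_eq_smul hA, inv_norm_smul_smul_of_pos hcoeff]

end Eigenvector

theorem stmt17_general (T : GL (Fin 2) ℝ) (l : ℝ) (hl : l < 0)
    (a : EuclideanSpace ℝ (Fin 2))
    (hTa : Matrix.toEuclideanLin (T : Matrix (Fin 2) (Fin 2) ℝ) a = l • a)
    (ha0 : 0 < ‖a‖)
    (ha1 : ‖a‖ < 1 / ‖Matrix.toEuclideanCLM (𝕜 := ℝ) ((T⁻¹ : GL (Fin 2) ℝ) : Matrix (Fin 2) (Fin 2) ℝ)‖) :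
    affAct (T : Matrix (Fin 2) (Fin 2) ℝ) a
        (affAct (T : Matrix (Fin 2) (Fin 2) ℝ) a (‖a‖⁻¹ • a)) = ‖a‖⁻¹ • a ∧
    affAct (T : Matrix (Fin 2) (Fin 2) ℝ) a (‖a‖⁻¹ • a) ≠ ‖a‖⁻¹ • a := by
  have ha : a ≠ 0 := norm_pos_iff.mp ha0
  have hinv_le :
      |l|⁻¹ ≤ ‖Matrix.toEuclideanCLM (𝕜 := ℝ) ((T⁻¹ : GL (Fin 2) ℝ) : Matrix (Fin 2) (Fin 2) ℝ)‖ := by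
    simpa [abs_inv] using (Matrix.toEuclideanCLM (𝕜 := ℝ) _).norm_le_opNorm_of_apply_eq_smul ha
      (Matrix.toEuclideanCLM_inv_apply_of_apply_eq_smul T hl.ne hTa)
  have hal : ‖a‖ < -l := by
    rw [one_div] at ha1
    rw [← abs_of_neg hl]
    exact ha1.trans_le (inv_le_of_inv_le₀ (abs_pos.mpr hl.ne) hinv_le)
  have hflip := affAct_inv_norm_smul_of_apply_eq_smul hTa ha hal
  refine ⟨by rw [hflip, affAct_neg_inv_norm_smul_of_apply_eq_smul hTa hl], ?_⟩
  rw [hflip, Ne, neg_eq_iff_add_eq_zero, ← two_smul ℝ, smul_eq_zero]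
  simp [ha]

theorem stmt17 (T : GL (Fin 2) ℝ) (l l' : ℝ) (hl : l < 0) (hl' : l' < 0)
    (a : EuclideanSpace ℝ (Fin 2))
    (hTa : Matrix.toEuclideanLin (T : Matrix (Fin 2) (Fin 2) ℝ) a = l • a)
    (heig' : ∃ v : EuclideanSpace ℝ (Fin 2), v ≠ 0 ∧
      Matrix.toEuclideanLin (T : Matrix (Fin 2) (Fin 2) ℝ) v = l' • v)
    (ha0 : 0 < ‖a‖)
    (ha1 : ‖a‖ < 1 / ‖Matrix.toEuclideanCLM (𝕜 := ℝ) ((T⁻¹ : GL (Fin 2) ℝ) : Matrix (Fin 2) (Fin 2) ℝ)‖) :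
    affAct (T : Matrix (Fin 2) (Fin 2) ℝ) a
        (affAct (T : Matrix (Fin 2) (Fin 2) ℝ) a (‖a‖⁻¹ • a)) = ‖a‖⁻¹ • a ∧
    affAct (T : Matrix (Fin 2) (Fin 2) ℝ) a (‖a‖⁻¹ • a) ≠ ‖a‖⁻¹ • a :=
  stmt17_general T l hl a hTa ha0 ha1
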